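/- Let G be a d×d real positive definite matrix and X, Y Hermitian d×d matrices with X ≥ Y (Loewner order). Then Tr(G·Re X) + Tr|√G (Im X) √G| ≥ Tr(G·Re Y) + Tr|√G (Im Y) √G|. -/

import Mathlib

open Matrix
open scoped ComplexOrder
noncomputable section

/-- The positive semidefinite square root of a positive semidefinite matrix, with the
definition it had in the older Mathlib (removed since). -/
def Matrix.PosSemidef.sqrt {n : Type*} [Fintype n] [DecidableEq n] {𝕜 : Type*} [RCLike 𝕜]
    {A : Matrix n n 𝕜} (hA : A.PosSemidef) : Matrix n n 𝕜 :=
  hA.1.eigenvectorUnitary.1 * diagonal ((↑) ∘ (√·) ∘ hA.1.eigenvalues) *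
  (star hA.1.eigenvectorUnitary : Matrix n n 𝕜)

/-- Entrywise real part, as a complex matrix. -/
def reM {m n : Type*} (J : Matrix m n ℂ) : Matrix m n ℂ := fun i j => ((J i j).re : ℂ)

/-- Entrywise imaginary part, as a complex matrix. -/
def imM {m n : Type*} (J : Matrix m n ℂ) : Matrix m n ℂ := fun i j => ((J i j).im : ℂ)

/-- A complex matrix has all real entries. -/
def IsRealMat {m n : Type*} (A : Matrix m n ℂ) : Prop := ∀ i j, (A i j).im = 0

/-- Matrix absolute value `|A| = √(Aᴴ A)`. -/
def matAbs {n : Type*} [Fintype n] [DecidableEq n] (A : Matrix n n ℂ) : Matrix n n ℂ :=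
  (Matrix.posSemidef_conjTranspose_mul_self A).sqrt

/-! Conjugating by `√G`, which is real and hence commutes with taking entrywise real and
imaginary parts, reduces the claim to `G = 1`. Given `Y ≤ X`, the matrix
`V = Re X + |i Im X|` dominates both `X = Re X + i Im X` and its entrywise conjugate
`Re X - i Im X`, hence also `Y` and its conjugate. Thus `±(i Im Y) ≤ V - Re Y`, and comparing
diagonal entries in an eigenbasis of `i Im Y` gives `Tr |Im Y| ≤ Tr V - Tr Re Y`. -/

open scoped MatrixOrder ComplexConjugate

namespace Matrix

section Conj

variable {n : Type*}

lemma map_conj_of_isHermitian {A : Matrix n n ℂ} (hA : A.IsHermitian) : A.map conj = Aᵀ := by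
  ext i j
  simpa using congrFun (congrFun hA j) i

lemma isRealMat_iff_map_conj {A : Matrix n n ℂ} : IsRealMat A ↔ A.map conj = A := by
  simp only [IsRealMat, ← Matrix.ext_iff, map_apply, Complex.conj_eq_iff_im]

lemma reM_add_I_smul_imM (Z : Matrix n n ℂ) : reM Z + Complex.I • imM Z = Z := by
  ext i j
  simp [reM, imM, mul_comm Complex.I, Complex.re_add_im]

lemma map_conj_eq_reM_sub_I_smul_imM (Z : Matrix n n ℂ) :
    Z.map conj = reM Z - Complex.I • imM Z := by
  ext i j
  apply Complex.ext <;> simp [reM, imM]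

lemma reM_eq_smul_add_map_conj (Z : Matrix n n ℂ) :
    reM Z = (2⁻¹ : ℂ) • (Z + Z.map conj) := by
  ext i j
  simp [reM, Complex.re_eq_add_conj, div_eq_inv_mul]

lemma imM_eq_smul_sub_map_conj (Z : Matrix n n ℂ) :
    imM Z = (2 * Complex.I)⁻¹ • (Z - Z.map conj) := by
  ext i j
  simp [imM, Complex.im_eq_sub_conj, div_eq_inv_mul]

lemma isHermitian_I_smul_imM {Z : Matrix n n ℂ} (hZ : Z.IsHermitian) :
    (Complex.I • imM Z).IsHermitian := by
  ext i j
  have hij := congrFun (congrFun hZ i) j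
  simp only [conjTranspose_apply, RCLike.star_def] at hij
  simp [imM, ← hij]

lemma map_conj_le_map_conj {A B : Matrix n n ℂ} (h : A ≤ B) : A.map conj ≤ B.map conj := by
  rw [le_iff] at h ⊢
  rw [← Matrix.map_sub _ (map_sub _), map_conj_of_isHermitian h.1]
  exact h.transpose

end Conj

variable {n : Type*} [Fintype n]

lemma map_conj_mul_mul {S Z : Matrix n n ℂ} (hS : IsRealMat S) :
    (S * Z * S).map conj = S * Z.map conj * S := by
  rw [Matrix.map_mul, Matrix.map_mul, isRealMat_iff_map_conj.mp hS]

lemma reM_mul_mul {S Z : Matrix n n ℂ} (hS : IsRealMat S) : reM (S * Z * S) = S * reM Z * S := by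
  simp only [reM_eq_smul_add_map_conj, map_conj_mul_mul hS, Matrix.mul_add, Matrix.add_mul,
    Matrix.mul_smul, Matrix.smul_mul, smul_add]

lemma imM_mul_mul {S Z : Matrix n n ℂ} (hS : IsRealMat S) : imM (S * Z * S) = S * imM Z * S := by
  simp only [imM_eq_smul_sub_map_conj, map_conj_mul_mul hS, Matrix.mul_sub, Matrix.sub_mul,
    Matrix.mul_smul, Matrix.smul_mul, smul_sub]

variable [DecidableEq n]

lemma PosSemidef.sqrt_eq_cfcSqrt {𝕜 : Type*} [RCLike 𝕜] {A : Matrix n n 𝕜}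
    (hA : A.PosSemidef) : hA.sqrt = CFC.sqrt A := by
  rw [CFC.sqrt_eq_real_sqrt A hA.nonneg, cfcₙ_eq_cfc (hf0 := Real.sqrt_zero),
    hA.1.cfc_eq, IsHermitian.cfc, Unitary.conjStarAlgAut_apply]
  rfl

lemma matAbs_eq_cfcAbs (A : Matrix n n ℂ) : matAbs A = CFC.abs A :=
  (posSemidef_conjTranspose_mul_self A).sqrt_eq_cfcSqrt

lemma isRealMat_cfcSqrt {A : Matrix n n ℂ} (hA : 0 ≤ A) (hreal : IsRealMat A) :
    IsRealMat (CFC.sqrt A) := by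
  rw [isRealMat_iff_map_conj] at hreal ⊢
  have hnonneg : 0 ≤ (CFC.sqrt A).map conj := by
    simpa using map_conj_le_map_conj (CFC.sqrt_nonneg A)
  rw [eq_comm, CFC.sqrt_eq_iff _ _ hA hnonneg, ← Matrix.map_mul, CFC.sqrt_mul_sqrt_self A hA,
    hreal]

lemma cfcAbs_I_smul (A : Matrix n n ℂ) : CFC.abs (Complex.I • A) = CFC.abs A := by
  simp

lemma trace_cfcAbs {H : Matrix n n ℂ} (hH : H.IsHermitian) :
    trace (CFC.abs H) = ∑ i, ((|hH.eigenvalues i| : ℝ) : ℂ) := by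
  rw [CFC.abs_eq_cfc_norm H hH.isSelfAdjoint, hH.cfc_eq, IsHermitian.cfc,
    Unitary.conjStarAlgAut_apply, trace_mul_cycle, Unitary.coe_star_mul_self, one_mul,
    trace_diagonal]
  simp

lemma trace_cfcAbs_le {H W : Matrix n n ℂ} (hH : H.IsHermitian) (h₁ : H ≤ W)
    (h₂ : -H ≤ W) : trace (CFC.abs H) ≤ trace W := by
  set U : Matrix n n ℂ := hH.eigenvectorUnitary.1
  have hdiag : star U * H * U = diagonal (Complex.ofReal ∘ hH.eigenvalues) := by
    simpa [U] using hH.conjStarAlgAut_star_eigenvectorUnitary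
  have hconj {B : Matrix n n ℂ} (hB : B ≤ W) (i : n) :
      (star U * B * U) i i ≤ (star U * W * U) i i := by
    have := (le_iff.mp (star_left_conjugate_le_conjugate hB U)).diag_nonneg (i := i)
    simpa [sub_nonneg] using this
  have hentry (i : n) : ((|hH.eigenvalues i| : ℝ) : ℂ) ≤ (star U * W * U) i i := by
    rcases abs_cases (hH.eigenvalues i) with ⟨h, -⟩ | ⟨h, -⟩
    · simpa [h, hdiag] using hconj h₁ i
    · simpa [h, hdiag, Matrix.mul_neg, Matrix.neg_mul] using hconj h₂ i
  calc trace (CFC.abs H) = ∑ i, ((|hH.eigenvalues i| : ℝ) : ℂ) := trace_cfcAbs hH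
    _ ≤ ∑ i, (star U * W * U) i i := Finset.sum_le_sum fun i _ => hentry i
    _ = trace (star U * W * U) := rfl
    _ = trace W := by
      rw [trace_mul_cycle, Unitary.mul_star_self_of_mem hH.eigenvectorUnitary.2, one_mul]

lemma le_cfcAbs {H : Matrix n n ℂ} (hH : H.IsHermitian) : H ≤ CFC.abs H := by
  rw [← sub_nonneg, CFC.abs_sub_self H hH.isSelfAdjoint]
  exact nsmul_nonneg (CFC.negPart_nonneg H) 2

lemma neg_le_cfcAbs {H : Matrix n n ℂ} (hH : H.IsHermitian) : -H ≤ CFC.abs H := by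
  rw [neg_le_iff_add_nonneg, CFC.abs_add_self H hH.isSelfAdjoint]
  exact nsmul_nonneg (CFC.posPart_nonneg H) 2

lemma trace_reM_add_trace_cfcAbs_imM_mono {X Y : Matrix n n ℂ} (hX : X.IsHermitian)
    (hY : Y.IsHermitian) (hXY : Y ≤ X) :
    trace (reM Y) + trace (CFC.abs (imM Y)) ≤ trace (reM X) + trace (CFC.abs (imM X)) := by
  set V := reM X + CFC.abs (Complex.I • imM X)
  have hXV : X ≤ V := by
    conv_lhs => rw [← reM_add_I_smul_imM X]
    exact add_le_add_right (le_cfcAbs (isHermitian_I_smul_imM hX)) _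
  have hconjXV : X.map conj ≤ V := by
    rw [map_conj_eq_reM_sub_I_smul_imM, sub_eq_add_neg]
    exact add_le_add_right (neg_le_cfcAbs (isHermitian_I_smul_imM hX)) _
  have h₁ : Complex.I • imM Y ≤ V - reM Y := by
    rw [le_sub_iff_add_le', reM_add_I_smul_imM]
    exact hXY.trans hXV
  have h₂ : -(Complex.I • imM Y) ≤ V - reM Y := by
    rw [le_sub_iff_add_le', ← sub_eq_add_neg, ← map_conj_eq_reM_sub_I_smul_imM]
    exact (map_conj_le_map_conj hXY).trans hconjXV
  have key := trace_cfcAbs_le (isHermitian_I_smul_imM hY) h₁ h₂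
  rw [cfcAbs_I_smul, trace_sub, trace_add, cfcAbs_I_smul] at key
  exact le_sub_iff_add_le'.mp key

end Matrix

/-- Monotonicity of `X ↦ Tr(G Re X) + Tr|√G (Im X) √G|` in the Loewner order on Hermitian
matrices, for `G` real positive definite. -/
theorem trace_abs_monotone {d : ℕ} (G X Y : Matrix (Fin d) (Fin d) ℂ)
    (hG : G.PosDef) (hGreal : IsRealMat G)
    (hX : X.IsHermitian) (hY : Y.IsHermitian) (hXY : (X - Y).PosSemidef) :
    (Matrix.trace (G * reM X)).re +
        (Matrix.trace (matAbs (hG.posSemidef.sqrt * imM X * hG.posSemidef.sqrt))).re ≥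
      (Matrix.trace (G * reM Y)).re +
        (Matrix.trace (matAbs (hG.posSemidef.sqrt * imM Y * hG.posSemidef.sqrt))).re := by
  set S := hG.posSemidef.sqrt
  have hS : S = CFC.sqrt G := hG.posSemidef.sqrt_eq_cfcSqrt
  have hSreal : IsRealMat S := hS ▸ isRealMat_cfcSqrt hG.posSemidef.nonneg hGreal
  have hSS : S * S = G := hS ▸ CFC.sqrt_mul_sqrt_self G hG.posSemidef.nonneg
  have hSH : Sᴴ = S := hS ▸ (CFC.sqrt_nonneg G).isSelfAdjoint.star_eq
  have htrace (Z : Matrix (Fin d) (Fin d) ℂ) : trace (G * reM Z) = trace (reM (S * Z * S)) := by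
    rw [reM_mul_mul hSreal, trace_mul_cycle, hSS]
  have habs (Z : Matrix (Fin d) (Fin d) ℂ) :
      matAbs (S * imM Z * S) = CFC.abs (imM (S * Z * S)) := by
    rw [imM_mul_mul hSreal, matAbs_eq_cfcAbs]
  have hconj {Z : Matrix (Fin d) (Fin d) ℂ} (hZ : Z.IsHermitian) : (S * Z * S).IsHermitian := by
    simpa only [hSH] using isHermitian_conjTranspose_mul_mul S hZ
  have hle : S * Y * S ≤ S * X * S := by
    simpa only [star_eq_conjTranspose, hSH] using
      star_left_conjugate_le_conjugate (le_iff.mpr hXY) S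
  have hmono := trace_reM_add_trace_cfcAbs_imM_mono (hconj hX) (hconj hY) hle
  rw [ge_iff_le, htrace, htrace, habs, habs, ← Complex.add_re, ← Complex.add_re]
  exact (Complex.le_def.mp hmono).1
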